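/- arXiv:1703.00437 — 3 statements merged into one kernel-verified Lean document; each statement's English description precedes it below -/
import Mathlib

section
/- Uniqueness for the discrete Navier–Stokes problem under a smallness condition: with the setting of the a priori bound, additionally assume |c̃_h(w; u, v)| ≤ Ĉ ‖w‖ ‖u‖ ‖v‖ for all w,u,v, and that γ_h := Ĉ ‖f_h‖_* / (α² ν²) < 1. Then there is at most one u_h ∈ Z_h solving ν a_h(u_h, v) + c̃_h(u_h; u_h, v) = f_h(v) for all v ∈ Z_h. -/
/-!
Subtracting the equations for two solutions and testing with their difference `e = u₁ - u₂`,
skew-symmetry of `c` kills every trilinear term except `c(e; u₁, e)`, so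
`αν‖e‖² ≤ ν a(e, e) = -c(e; u₁, e) ≤ C ‖e‖² ‖u₁‖ ≤ (C ‖f‖ / (αν)) ‖e‖²`
by the a priori bound on `u₁`. The smallness condition makes the last factor smaller than `αν`,
which forces `e = 0`.
-/

section ErrorIdentity

variable {R Z : Type*} [CommRing R] [AddCommGroup Z] [Module R Z]

theorem apply_self_sub_eq_neg_of_solutions {ν : R} {a : Z →ₗ[R] Z →ₗ[R] R}
    {c : Z →ₗ[R] Z →ₗ[R] Z →ₗ[R] R} (hc : ∀ w v, c w v v = 0) {f : Z → R} {u₁ u₂ : Z}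
    (h₁ : ∀ v, ν * a u₁ v + c u₁ u₁ v = f v) (h₂ : ∀ v, ν * a u₂ v + c u₂ u₂ v = f v) :
    ν * a (u₁ - u₂) (u₁ - u₂) = - c (u₁ - u₂) u₁ (u₁ - u₂) := by
  have hdiff := congrArg₂ (· - ·) (h₁ (u₁ - u₂)) (h₂ (u₁ - u₂))
  have hu₂ := hc u₂ (u₁ - u₂)
  simp only [map_sub, LinearMap.sub_apply, sub_self] at hdiff hu₂ ⊢
  linear_combination hdiff - hu₂

end ErrorIdentity

section Estimates

variable {Z : Type*} [NormedAddCommGroup Z] [NormedSpace ℝ Z] {ν α : ℝ}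
  {a : Z →ₗ[ℝ] Z →ₗ[ℝ] ℝ} {c : Z →ₗ[ℝ] Z →ₗ[ℝ] Z →ₗ[ℝ] ℝ}

theorem norm_le_of_coercive_of_solution (hν : 0 < ν) (hα : 0 < α)
    (hcoer : ∀ v, α * ‖v‖ ^ 2 ≤ a v v) (hc : ∀ w v, c w v v = 0) {f : Z →L[ℝ] ℝ} {u : Z}
    (hu : ∀ v, ν * a u v + c u u v = f v) :
    ‖u‖ ≤ ‖f‖ / (α * ν) := by
  have henergy : α * ν * ‖u‖ * ‖u‖ ≤ ‖f‖ * ‖u‖ :=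
    calc α * ν * ‖u‖ * ‖u‖ = ν * (α * ‖u‖ ^ 2) := by ring
      _ ≤ ν * a u u := mul_le_mul_of_nonneg_left (hcoer u) hν.le
      _ = f u := by linarith [hu u, hc u u]
      _ ≤ ‖f‖ * ‖u‖ := (le_abs_self _).trans (f.le_opNorm u)
  rw [le_div_iff₀ (by positivity)]
  rcases (norm_nonneg u).eq_or_lt with hu0 | hupos
  · rw [← hu0, zero_mul]
    exact norm_nonneg f
  · linarith [le_of_mul_le_mul_right henergy hupos]

end Estimates

/-- Uniqueness for the discrete Navier–Stokes problem under the smallness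
condition `γ_h := Ĉ ‖f_h‖_* / (α² ν²) < 1`. -/
theorem stmt6 (Z : Type*) [NormedAddCommGroup Z] [NormedSpace ℝ Z]
    (ν α C : ℝ) (hν : 0 < ν) (hα : 0 < α) (hC : 0 < C)
    (a : Z →ₗ[ℝ] Z →ₗ[ℝ] ℝ)
    (hcoer : ∀ v : Z, α * ‖v‖ ^ 2 ≤ a v v)
    (c : Z →ₗ[ℝ] Z →ₗ[ℝ] Z →ₗ[ℝ] ℝ)
    (hskew : ∀ w u v : Z, c w u v = - c w v u)
    (hbound : ∀ w u v : Z, |c w u v| ≤ C * ‖w‖ * ‖u‖ * ‖v‖)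
    (f : Z →L[ℝ] ℝ)
    (hsmall : C * ‖f‖ / (α ^ 2 * ν ^ 2) < 1)
    (u₁ u₂ : Z)
    (h₁ : ∀ v : Z, ν * a u₁ v + c u₁ u₁ v = f v)
    (h₂ : ∀ v : Z, ν * a u₂ v + c u₂ u₂ v = f v) :
    u₁ = u₂ := by
  have hc : ∀ w v, c w v v = 0 := fun w v => by linarith [hskew w v v]
  have hu₁ := norm_le_of_coercive_of_solution hν hα hcoer hc h₁
  set e := u₁ - u₂
  have hαν : 0 < α * ν := by positivity
  have hestimate : α * ν * ‖e‖ ^ 2 ≤ C * ‖f‖ / (α * ν) * ‖e‖ ^ 2 :=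
    calc α * ν * ‖e‖ ^ 2 ≤ ν * a e e := by nlinarith [hcoer e]
      _ = - c e u₁ e := apply_self_sub_eq_neg_of_solutions hc h₁ h₂
      _ ≤ C * ‖e‖ * ‖u₁‖ * ‖e‖ := (neg_le_abs _).trans (hbound e u₁ e)
      _ ≤ C * ‖e‖ * (‖f‖ / (α * ν)) * ‖e‖ := by gcongr
      _ = C * ‖f‖ / (α * ν) * ‖e‖ ^ 2 := by ring
  have hgap : C * ‖f‖ / (α * ν) < α * ν := by
    rw [div_lt_one (by positivity)] at hsmall
    rw [div_lt_iff₀ hαν]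
    linarith
  have he0 : ‖e‖ ^ 2 = 0 := by nlinarith [sq_nonneg ‖e‖]
  rwa [sq_eq_zero_iff, norm_eq_zero, sub_eq_zero] at he0
end

section
/- Abstract inf-sup approximation of the discrete kernel: let V_h ⊆ V be a closed subspace of a Hilbert space V, Q_h a Hilbert space, and b : V × Q_h → ℝ a bounded bilinear form (bound ‖b‖) satisfying the discrete inf-sup condition sup_{v_h ∈ V_h, v_h ≠ 0} b(v_h, q_h)/‖v_h‖ ≥ β̂ ‖q_h‖ for all q_h ∈ Q_h with β̂ > 0. Let Z_h := {v_h ∈ V_h : b(v_h, q_h) = 0 ∀ q_h} and Z := {v ∈ V : b(v, q_h) = 0 ∀ q_h}. Then for every v ∈ Z, inf_{v_h ∈ Z_h} ‖v − v_h‖ ≤ (1 + ‖b‖/β̂) inf_{w_h ∈ V_h} ‖v − w_h‖. -/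
open InnerProductSpace ContinuousLinearMap RealInnerProductSpace

/-!
Given `v ∈ Z` and `w_h ∈ V_h`, the inf-sup condition lets one solve `b(r_h, ·) = b(v - w_h, ·)`
with `r_h ∈ V_h` and `β̂ ‖r_h‖ ≤ ‖b‖ ‖v - w_h‖`; then `w_h + r_h ∈ Z_h`, and the triangle
inequality gives the estimate. To find `r_h`, let `T : V_h → Q_h` represent `b` and `f ∈ Q_h`
represent `b(v - w_h, ·)`. The inf-sup condition says `β̂ ‖q‖ ≤ ‖T* q‖`, so `T T*` is coercive
and Lax–Milgram gives `g` with `T T* g = f`. Then `r_h := T* g` works, since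
`‖r_h‖² = ⟪f, g⟫ ≤ ‖f‖ ‖g‖ ≤ ‖f‖ ‖r_h‖ / β̂`.
-/

section

variable {E F : Type*} [NormedAddCommGroup E] [InnerProductSpace ℝ E]
  [NormedAddCommGroup F] [InnerProductSpace ℝ F]

theorem ContinuousLinearMap.exists_preimage_norm_le_of_le_norm_adjoint
    [CompleteSpace E] [CompleteSpace F] (A : E →L[ℝ] F)
    {β : ℝ} (hβ : 0 < β) (hA : ∀ y, β * ‖y‖ ≤ ‖adjoint A y‖) (y : F) :
    ∃ x, A x = y ∧ β * ‖x‖ ≤ ‖y‖ := by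
  have hAAadj : ∀ u w, ⟪A (adjoint A u), w⟫_ℝ = ⟪adjoint A u, adjoint A w⟫_ℝ := fun u w =>
    (adjoint_inner_right A _ _).symm
  have coercive : IsCoercive ((innerSL ℝ).comp (A ∘L adjoint A)) := by
    refine ⟨β * β, mul_pos hβ hβ, fun u => ?_⟩
    have := mul_le_mul (hA u) (hA u) (by positivity) (norm_nonneg _)
    calc β * β * ‖u‖ * ‖u‖ ≤ ‖adjoint A u‖ * ‖adjoint A u‖ := by linarith
      _ = ⟪A (adjoint A u), u⟫_ℝ := by rw [hAAadj, real_inner_self_eq_norm_mul_norm]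
  obtain ⟨g, hg⟩ : ∃ g, A (adjoint A g) = y := by
    refine ⟨coercive.continuousLinearEquivOfBilin.symm y, ext_inner_right ℝ fun w => ?_⟩
    have := coercive.continuousLinearEquivOfBilin_apply
      (coercive.continuousLinearEquivOfBilin.symm y) w
    rw [ContinuousLinearEquiv.apply_symm_apply] at this
    exact this.symm
  refine ⟨adjoint A g, hg, ?_⟩
  set x := adjoint A g
  have hsq : β * (‖x‖ * ‖x‖) ≤ ‖y‖ * ‖x‖ :=
    calc β * (‖x‖ * ‖x‖) = β * ⟪y, g⟫_ℝ := by rw [← real_inner_self_eq_norm_mul_norm, ← hAAadj, hg]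
      _ ≤ ‖y‖ * (β * ‖g‖) := by nlinarith [real_inner_le_norm y g]
      _ ≤ ‖y‖ * ‖x‖ := by gcongr; exact hA g
  rcases (norm_nonneg x).eq_or_lt with hx | hx
  · rw [← hx, mul_zero]
    exact norm_nonneg y
  · exact le_of_mul_le_mul_right (by linarith) hx

theorem ContinuousLinearMap.exists_preimage_norm_le_of_le_norm_flip
    [CompleteSpace E] [CompleteSpace F] (B : E →L[ℝ] F →L[ℝ] ℝ) {β : ℝ} (hβ : 0 < β)
    (hB : ∀ y, β * ‖y‖ ≤ ‖B.flip y‖)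
    (φ : StrongDual ℝ F) : ∃ x, B x = φ ∧ β * ‖x‖ ≤ ‖φ‖ := by
  set R : StrongDual ℝ F →L[ℝ] F :=
    ((toDual ℝ F).symm.toContinuousLinearEquiv : StrongDual ℝ F ≃L[ℝ] F).toContinuousLinearMap
  have hR : ∀ ψ y, ⟪R ψ, y⟫_ℝ = ψ y := fun ψ y => toDual_symm_apply
  have hA : ∀ y, β * ‖y‖ ≤ ‖adjoint (R ∘L B) y‖ := by
    refine fun y => (hB y).trans (opNorm_le_bound _ (norm_nonneg _) fun x => ?_)
    rw [flip_apply, ← hR, ← comp_apply, ← adjoint_inner_right, Real.norm_eq_abs]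
    exact (abs_real_inner_le_norm _ _).trans_eq (mul_comm _ _)
  obtain ⟨x, hx, hxφ⟩ := (R ∘L B).exists_preimage_norm_le_of_le_norm_adjoint hβ hA (R φ)
  refine ⟨x, ext fun y => ?_, by simpa [R] using hxφ⟩
  rw [← hR, ← hR, ← comp_apply, hx]

theorem sSup_div_norm_le_norm_flip_comp_subtypeL (B : E →L[ℝ] F →L[ℝ] ℝ)
    (K : Submodule ℝ E) (y : F) :
    sSup {r : ℝ | ∃ x ∈ K, x ≠ 0 ∧ r = B x y / ‖x‖} ≤ ‖(B ∘L K.subtypeL).flip y‖ := by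
  refine Real.sSup_le ?_ (norm_nonneg _)
  rintro r ⟨x, hxK, hx, rfl⟩
  rw [div_le_iff₀ (norm_pos_iff.mpr hx)]
  exact (le_abs_self _).trans (le_opNorm ((B ∘L K.subtypeL).flip y) ⟨x, hxK⟩)

theorem exists_mem_ker_norm_sub_le [CompleteSpace F] (B : E →L[ℝ] F →L[ℝ] ℝ) (K : Submodule ℝ E)
    [CompleteSpace K] {β : ℝ} (hβ : 0 < β)
    (hB : ∀ y, β * ‖y‖ ≤ ‖(B ∘L K.subtypeL).flip y‖) {v : E} (hv : B v = 0)
    {w : E} (hw : w ∈ K) : ∃ z ∈ K, B z = 0 ∧ ‖v - z‖ ≤ (1 + ‖B‖ / β) * ‖v - w‖ := by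
  obtain ⟨r, hr, hr_norm⟩ :=
    (B ∘L K.subtypeL).exists_preimage_norm_le_of_le_norm_flip hβ hB (B (v - w))
  refine ⟨w + r, K.add_mem hw r.2, ?_, ?_⟩
  · rw [map_add, show B r = B (v - w) from hr, map_sub, hv]
    abel
  · have hr_le : ‖(r : E)‖ ≤ ‖B‖ / β * ‖v - w‖ := by
      rw [div_mul_eq_mul_div, le_div_iff₀ hβ, mul_comm]
      exact hr_norm.trans (le_opNorm B _)
    calc ‖v - (w + r)‖ = ‖(v - w) - r‖ := by rw [sub_add_eq_sub_sub]
      _ ≤ ‖v - w‖ + ‖(r : E)‖ := norm_sub_le _ _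
      _ ≤ (1 + ‖B‖ / β) * ‖v - w‖ := by linarith

end

/-- Abstract inf-sup approximation of the discrete kernel: under the discrete
inf-sup condition, for every `v` in the continuous kernel `Z`,
`inf_{v_h ∈ Z_h} ‖v − v_h‖ ≤ (1 + ‖b‖/β̂) inf_{w_h ∈ V_h} ‖v − w_h‖`. -/
theorem stmt12 (V : Type*) [NormedAddCommGroup V] [InnerProductSpace ℝ V]
    [CompleteSpace V]
    (Q : Type*) [NormedAddCommGroup Q] [InnerProductSpace ℝ Q] [CompleteSpace Q]
    (Vh : Submodule ℝ V) (hVh : IsClosed (Vh : Set V))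
    (b : V →ₗ[ℝ] Q →ₗ[ℝ] ℝ) (Cb : ℝ) (hCb : 0 < Cb)
    (hbound : ∀ (v : V) (q : Q), |b v q| ≤ Cb * ‖v‖ * ‖q‖)
    (β : ℝ) (hβ : 0 < β)
    (hinfsup : ∀ q : Q,
      β * ‖q‖ ≤ sSup {r : ℝ | ∃ vh ∈ Vh, vh ≠ 0 ∧ r = b vh q / ‖vh‖})
    (v : V) (hv : ∀ q : Q, b v q = 0) :
    (⨅ vh : {x : V // x ∈ Vh ∧ ∀ q : Q, b x q = 0}, ‖v - (vh : V)‖) ≤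
      (1 + Cb / β) * ⨅ wh : Vh, ‖v - (wh : V)‖ := by
  have : CompleteSpace Vh := hVh.completeSpace_coe
  set B : V →L[ℝ] Q →L[ℝ] ℝ := LinearMap.mkContinuous₂ b Cb hbound
  have hB : ‖B‖ ≤ Cb := LinearMap.mkContinuous₂_norm_le b hCb.le hbound
  have key : ∀ wh : Vh, ∃ z : {x : V // x ∈ Vh ∧ ∀ q : Q, b x q = 0},
      ‖v - (z : V)‖ ≤ (1 + Cb / β) * ‖v - (wh : V)‖ := by
    intro wh
    obtain ⟨z, hz, hBz, hle⟩ := exists_mem_ker_norm_sub_le B Vh hβ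
      (fun q => (hinfsup q).trans (sSup_div_norm_le_norm_flip_comp_subtypeL B Vh q))
      (ext hv) wh.2
    refine ⟨⟨z, hz, fun q => congrArg (· q) hBz⟩, hle.trans ?_⟩
    gcongr
  rw [Real.mul_iInf_of_nonneg (by positivity)]
  refine le_ciInf fun wh => ?_
  obtain ⟨z, hz⟩ := key wh
  exact (ciInf_le ⟨0, by rintro _ ⟨_, rfl⟩; positivity⟩ z).trans hz
end

section
/- Combined inf-sup for a sum of constraints: let Φ be a Hilbert space and M₁, M₂ Hilbert spaces, with bounded bilinear forms b₁ : Φ × M₁ → ℝ and d : Φ × M₂ → ℝ (bound c_cont for d). Suppose for every q ∈ M₁ there exists φ₁ with ‖φ₁‖ ≤ b₁* ‖q‖ and b₁(φ₁, q) ≥ c₁ ‖q‖², and for every m ∈ M₂ there exists φ₂ with ‖φ₂‖ ≤ b₂* ‖m‖, d(φ₂, m) ≥ c₂ ‖m‖², and b₁(φ₂, q) = 0 for all q ∈ M₁. Then there exist constants b₀, c₀ > 0 (depending only on b₁*, b₂*, c₁, c₂, c_cont) such that for every (q, m) ∈ M₁ × M₂ there is φ ∈ Φ with ‖φ‖ ≤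 b₀(‖q‖ + ‖m‖) and b₁(φ, q) + d(φ, m) ≥ c₀ (‖q‖ + ‖m‖)². -/
/-!
Test with `φ := φ₁ + ξ φ₂`. Since `φ₂` lies in the kernel of `b₁`, the only cross term is
`d(φ₁, m) ≥ -c_cont b₁* ‖q‖ ‖m‖`; Young's inequality with `ε = c₁ / (c_cont b₁*)` absorbs half
of it into `c₁ ‖q‖²`, and the weight `ξ = c_cont² b₁*² / (c₁ c₂)` makes `ξ d(φ₂, m)` dominate
the other half.
-/

lemma mul_mul_le_half_sq_add_sq_div (a β x y : ℝ) (ha : 0 < a) :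
    β * x * y ≤ a / 2 * x ^ 2 + β ^ 2 / (2 * a) * y ^ 2 := by
  have key : 0 ≤ (a * x - β * y) ^ 2 / (2 * a) := by positivity
  have expand : (a * x - β * y) ^ 2 / (2 * a)
      = a / 2 * x ^ 2 + β ^ 2 / (2 * a) * y ^ 2 - β * x * y := by
    field_simp
    ring
  linarith

lemma min_div_two_mul_add_sq_le (α β x y : ℝ) (hα : 0 ≤ α) (hβ : 0 ≤ β) :
    min α β / 2 * (x + y) ^ 2 ≤ α * x ^ 2 + β * y ^ 2 := by
  have hmin : 0 ≤ min α β := le_min hα hβ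
  calc min α β / 2 * (x + y) ^ 2 ≤ min α β / 2 * (x + y) ^ 2 + min α β / 2 * (x - y) ^ 2 :=
        le_add_of_nonneg_right (by positivity)
    _ = min α β * x ^ 2 + min α β * y ^ 2 := by ring
    _ ≤ α * x ^ 2 + β * y ^ 2 := by
        gcongr
        exacts [min_le_left α β, min_le_right α β]

lemma norm_add_smul_le_max_mul {E : Type*} [SeminormedAddCommGroup E] [NormedSpace ℝ E]
    {u v : E} {ξ a b x y : ℝ} (hξ : 0 ≤ ξ) (hx : 0 ≤ x) (hy : 0 ≤ y)
    (hu : ‖u‖ ≤ a * x) (hv : ‖v‖ ≤ b * y) :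
    ‖u + ξ • v‖ ≤ max a (ξ * b) * (x + y) :=
  calc ‖u + ξ • v‖ ≤ ‖u‖ + ξ * ‖v‖ := by
        simpa [norm_smul, abs_of_nonneg hξ] using norm_add_le u (ξ • v)
    _ ≤ a * x + ξ * b * y := by
        rw [mul_assoc ξ]
        gcongr
    _ ≤ max a (ξ * b) * x + max a (ξ * b) * y := by
        gcongr
        exacts [le_max_left _ _, le_max_right _ _]
    _ = max a (ξ * b) * (x + y) := by ring

section

variable {Φ M₁ M₂ : Type*} [SeminormedAddCommGroup Φ] [NormedSpace ℝ Φ]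
  [SeminormedAddCommGroup M₁] [NormedSpace ℝ M₁] [SeminormedAddCommGroup M₂] [NormedSpace ℝ M₂]

lemma half_sq_add_sq_le_apply_add_smul
    (b₁ : Φ →ₗ[ℝ] M₁ →ₗ[ℝ] ℝ) (d : Φ →ₗ[ℝ] M₂ →ₗ[ℝ] ℝ) {ccont b₁s c₁ c₂ ξ : ℝ}
    (hdbound : ∀ (φ : Φ) (m : M₂), |d φ m| ≤ ccont * ‖φ‖ * ‖m‖)
    (hccont : 0 ≤ ccont) (hc₁ : 0 < c₁) (hξ : 0 ≤ ξ)
    (hξc₂ : ξ * c₂ = (ccont * b₁s) ^ 2 / c₁)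
    {q : M₁} {m : M₂} {φ₁ φ₂ : Φ}
    (hφ₁n : ‖φ₁‖ ≤ b₁s * ‖q‖) (hφ₁b : c₁ * ‖q‖ ^ 2 ≤ b₁ φ₁ q)
    (hφ₂d : c₂ * ‖m‖ ^ 2 ≤ d φ₂ m) (hφ₂b : b₁ φ₂ q = 0) :
    c₁ / 2 * ‖q‖ ^ 2 + (ccont * b₁s) ^ 2 / (2 * c₁) * ‖m‖ ^ 2
      ≤ b₁ (φ₁ + ξ • φ₂) q + d (φ₁ + ξ • φ₂) m := by
  have hexpand : b₁ (φ₁ + ξ • φ₂) q + d (φ₁ + ξ • φ₂) m = b₁ φ₁ q + d φ₁ m + ξ * d φ₂ m := by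
    simp only [map_add, map_smul, LinearMap.add_apply, LinearMap.smul_apply, hφ₂b, smul_eq_mul,
      mul_zero, add_zero]
    ring
  have hcross : -(ccont * b₁s * ‖q‖ * ‖m‖) ≤ d φ₁ m := by
    have hφ₁ : ccont * ‖φ₁‖ * ‖m‖ ≤ ccont * (b₁s * ‖q‖) * ‖m‖ := by gcongr
    linarith [neg_abs_le (d φ₁ m), hdbound φ₁ m]
  have hweight : (ccont * b₁s) ^ 2 / c₁ * ‖m‖ ^ 2 ≤ ξ * d φ₂ m := by
    rw [← hξc₂, mul_assoc]
    exact mul_le_mul_of_nonneg_left hφ₂d hξ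
  have hyoung := mul_mul_le_half_sq_add_sq_div c₁ (ccont * b₁s) ‖q‖ ‖m‖ hc₁
  have hsplit : (ccont * b₁s) ^ 2 / c₁ = 2 * ((ccont * b₁s) ^ 2 / (2 * c₁)) := by
    field_simp
  rw [hsplit] at hweight
  rw [hexpand]
  linarith

end

theorem stmt15_general (Φ M₁ M₂ : Type*)
    [NormedAddCommGroup Φ] [InnerProductSpace ℝ Φ]
    [NormedAddCommGroup M₁] [InnerProductSpace ℝ M₁]
    [NormedAddCommGroup M₂] [InnerProductSpace ℝ M₂]
    (b₁ : Φ →ₗ[ℝ] M₁ →ₗ[ℝ] ℝ) (d : Φ →ₗ[ℝ] M₂ →ₗ[ℝ] ℝ)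
    (ccont : ℝ) (hccont : 0 < ccont)
    (hdbound : ∀ (φ : Φ) (m : M₂), |d φ m| ≤ ccont * ‖φ‖ * ‖m‖)
    (b₁s b₂s c₁ c₂ : ℝ)
    (hb₁s : 0 < b₁s) (hc₁ : 0 < c₁) (hc₂ : 0 < c₂)
    (h1 : ∀ q : M₁, ∃ φ₁ : Φ, ‖φ₁‖ ≤ b₁s * ‖q‖ ∧ c₁ * ‖q‖ ^ 2 ≤ b₁ φ₁ q)
    (h2 : ∀ m : M₂, ∃ φ₂ : Φ, ‖φ₂‖ ≤ b₂s * ‖m‖ ∧ c₂ * ‖m‖ ^ 2 ≤ d φ₂ m ∧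
      ∀ q : M₁, b₁ φ₂ q = 0) :
    ∃ b₀ : ℝ, 0 < b₀ ∧ ∃ c₀ : ℝ, 0 < c₀ ∧
      ∀ (q : M₁) (m : M₂), ∃ φ : Φ,
        ‖φ‖ ≤ b₀ * (‖q‖ + ‖m‖) ∧
        c₀ * (‖q‖ + ‖m‖) ^ 2 ≤ b₁ φ q + d φ m := by
  set ξ := ccont ^ 2 * b₁s ^ 2 / (c₁ * c₂)
  have hξ : 0 ≤ ξ := by positivity
  have hξc₂ : ξ * c₂ = (ccont * b₁s) ^ 2 / c₁ := by
    simp only [ξ]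
    field_simp
  refine ⟨max b₁s (ξ * b₂s), lt_max_of_lt_left hb₁s,
    min (c₁ / 2) ((ccont * b₁s) ^ 2 / (2 * c₁)) / 2, by positivity, fun q m => ?_⟩
  obtain ⟨φ₁, hφ₁n, hφ₁b⟩ := h1 q
  obtain ⟨φ₂, hφ₂n, hφ₂d, hφ₂b⟩ := h2 m
  refine ⟨φ₁ + ξ • φ₂,
    norm_add_smul_le_max_mul hξ (norm_nonneg q) (norm_nonneg m) hφ₁n hφ₂n, ?_⟩
  exact (min_div_two_mul_add_sq_le _ _ _ _ (by positivity) (by positivity)).trans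
    (half_sq_add_sq_le_apply_add_smul b₁ d hdbound hccont.le hc₁ hξ hξc₂ hφ₁n hφ₁b hφ₂d
      (hφ₂b q))

/-- Combined inf-sup for a sum of constraints: given separate inf-sup type
conditions for `b₁` and `d` (with the second family of test functions lying in
the kernel of `b₁`), there are `b₀, c₀ > 0` such that for every `(q, m)` there
is `φ` with `‖φ‖ ≤ b₀(‖q‖+‖m‖)` and `b₁(φ,q) + d(φ,m) ≥ c₀(‖q‖+‖m‖)²`. -/
theorem stmt15 (Φ M₁ M₂ : Type*)
    [NormedAddCommGroup Φ] [InnerProductSpace ℝ Φ] [CompleteSpace Φ]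
    [NormedAddCommGroup M₁] [InnerProductSpace ℝ M₁] [CompleteSpace M₁]
    [NormedAddCommGroup M₂] [InnerProductSpace ℝ M₂] [CompleteSpace M₂]
    (b₁ : Φ →ₗ[ℝ] M₁ →ₗ[ℝ] ℝ) (d : Φ →ₗ[ℝ] M₂ →ₗ[ℝ] ℝ)
    (ccont : ℝ) (hccont : 0 < ccont)
    (hdbound : ∀ (φ : Φ) (m : M₂), |d φ m| ≤ ccont * ‖φ‖ * ‖m‖)
    (b₁s b₂s c₁ c₂ : ℝ)
    (hb₁s : 0 < b₁s) (hb₂s : 0 < b₂s) (hc₁ : 0 < c₁) (hc₂ : 0 < c₂)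
    (h1 : ∀ q : M₁, ∃ φ₁ : Φ, ‖φ₁‖ ≤ b₁s * ‖q‖ ∧ c₁ * ‖q‖ ^ 2 ≤ b₁ φ₁ q)
    (h2 : ∀ m : M₂, ∃ φ₂ : Φ, ‖φ₂‖ ≤ b₂s * ‖m‖ ∧ c₂ * ‖m‖ ^ 2 ≤ d φ₂ m ∧
      ∀ q : M₁, b₁ φ₂ q = 0) :
    ∃ b₀ : ℝ, 0 < b₀ ∧ ∃ c₀ : ℝ, 0 < c₀ ∧
      ∀ (q : M₁) (m : M₂), ∃ φ : Φ,
        ‖φ‖ ≤ b₀ * (‖q‖ + ‖m‖) ∧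
        c₀ * (‖q‖ + ‖m‖) ^ 2 ≤ b₁ φ q + d φ m :=
  stmt15_general Φ M₁ M₂ b₁ d ccont hccont hdbound b₁s b₂s c₁ c₂ hb₁s hc₁ hc₂ h1 h2
end
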